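/- arXiv:1005.2010 — 3 statements merged into one kernel-verified Lean document; each statement's English description precedes it below -/
import Mathlib

section
/- Define a modified gradient on pairs of vector fields F = (X, Y) on an open subset of ℝ³ by grad F = (∂ⱼXₗ − εⱼₗᵐ Yₘ, ∂ⱼYₗ), and a corresponding curl on pairs of 2-tensor fields (Σ, Ξ) by curl(Σ, Ξ) = (εᵢʲᵏ ∂ⱼΣₖₗ − Ξₗᵢ + δᵢₗ Ξₘᵐ, εᵢʲᵏ ∂ⱼΞₖₗ). Then curl ∘ grad = 0, i.e. the connection defined by this gradient is flat. -/
open scoped BigOperators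

/-- Partial derivative in the `i`-th coordinate direction on `ℝ³`. -/
noncomputable def pd (i : Fin 3) (f : (Fin 3 → ℝ) → ℝ) (x : Fin 3 → ℝ) : ℝ :=
  fderiv ℝ f x (Pi.single i 1)

/-- The Levi-Civita symbol on `ℝ³` with `eps 0 1 2 = 1`. -/
noncomputable def eps (i j k : Fin 3) : ℝ :=
  (((j : ℕ) : ℝ) - ((i : ℕ) : ℝ)) * (((k : ℕ) : ℝ) - ((i : ℕ) : ℝ)) *
    (((k : ℕ) : ℝ) - ((j : ℕ) : ℝ)) / 2

private lemma fin_mk_two (h : 2 < 3) : (⟨2, h⟩ : Fin 3) = 2 := rfl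

private lemma pd_diffAt {f : (Fin 3 → ℝ) → ℝ} {x : Fin 3 → ℝ}
    (hf : ContDiffAt ℝ (⊤ : ℕ∞) f x) (k : Fin 3) : DifferentiableAt ℝ (pd k f) x := by
  show DifferentiableAt ℝ (fun y => fderiv ℝ f y (Pi.single k 1)) x
  have hd : ContDiffAt ℝ 1 (fderiv ℝ f) x := hf.fderiv_right (WithTop.coe_le_coe.mpr le_top)
  exact (hd.differentiableAt one_ne_zero).clm_apply (differentiableAt_const _)

private lemma pd_pd {f : (Fin 3 → ℝ) → ℝ} {x : Fin 3 → ℝ}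
    (hf : ContDiffAt ℝ (⊤ : ℕ∞) f x) (j k : Fin 3) :
    pd j (pd k f) x = fderiv ℝ (fderiv ℝ f) x (Pi.single j 1) (Pi.single k 1) := by
  have hd : DifferentiableAt ℝ (fderiv ℝ f) x :=
    ((hf.fderiv_right (WithTop.coe_le_coe.mpr le_top) : ContDiffAt ℝ 1 (fderiv ℝ f) x).differentiableAt one_ne_zero)
  show fderiv ℝ (fun y => fderiv ℝ f y (Pi.single k 1)) x (Pi.single j 1) = _
  rw [fderiv_clm_apply hd (differentiableAt_const _)]
  simp

private lemma pd_symm {f : (Fin 3 → ℝ) → ℝ} {x : Fin 3 → ℝ}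
    (hf : ContDiffAt ℝ (⊤ : ℕ∞) f x) (j k : Fin 3) :
    pd j (pd k f) x = pd k (pd j f) x := by
  rw [pd_pd hf, pd_pd hf]
  exact (hf.isSymmSndFDerivAt (by rw [minSmoothness_of_isRCLikeNormedField]; exact WithTop.coe_le_coe.mpr le_top)) _ _

private lemma pd_expand {x : Fin 3 → ℝ} (j : Fin 3) (c0 c1 c2 : ℝ)
    {f g0 g1 g2 : (Fin 3 → ℝ) → ℝ}
    (hf : DifferentiableAt ℝ f x) (h0 : DifferentiableAt ℝ g0 x)
    (h1 : DifferentiableAt ℝ g1 x) (h2 : DifferentiableAt ℝ g2 x) :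
    pd j (fun y => f y - (c0 * g0 y + c1 * g1 y + c2 * g2 y)) x
      = pd j f x - (c0 * pd j g0 x + c1 * pd j g1 x + c2 * pd j g2 x) := by
  unfold pd
  rw [fderiv_fun_sub hf (by fun_prop), fderiv_fun_add (by fun_prop) (by fun_prop),
    fderiv_fun_add (by fun_prop) (by fun_prop), fderiv_const_mul h0, fderiv_const_mul h1,
    fderiv_const_mul h2]
  simp

/-- The coupled `curl ∘ grad = 0`: the modified gradient on pairs of vector fields
defines a flat connection. -/
theorem coupled_curl_grad_eq_zero (U : Set (Fin 3 → ℝ)) (hU : IsOpen U)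
    (X Y : Fin 3 → (Fin 3 → ℝ) → ℝ)
    (hX : ∀ i, ContDiffOn ℝ (⊤ : ℕ∞) (X i) U) (hY : ∀ i, ContDiffOn ℝ (⊤ : ℕ∞) (Y i) U)
    (S Xi : Fin 3 → Fin 3 → (Fin 3 → ℝ) → ℝ)
    (hS : ∀ j l x, S j l x = pd j (X l) x - ∑ m, eps j l m * Y m x)
    (hXi : ∀ j l x, Xi j l x = pd j (Y l) x) :
    ∀ i l, ∀ x ∈ U,
      (∑ j, ∑ k, eps i j k * pd j (S k l) x) - Xi l i x
        + (if i = l then ∑ m, Xi m m x else 0) = 0 ∧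
      ∑ j, ∑ k, eps i j k * pd j (Xi k l) x = 0 := by
  intro i l x hx
  have cX : ∀ m, ContDiffAt ℝ (⊤ : ℕ∞) (X m) x := fun m => (hX m).contDiffAt (hU.mem_nhds hx)
  have cY : ∀ m, ContDiffAt ℝ (⊤ : ℕ∞) (Y m) x := fun m => (hY m).contDiffAt (hU.mem_nhds hx)
  have hpdS : ∀ j k l : Fin 3, pd j (S k l) x
      = pd j (pd k (X l)) x
        - (eps k l 0 * pd j (Y 0) x + eps k l 1 * pd j (Y 1) x + eps k l 2 * pd j (Y 2) x) := by
    intro j k l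
    have hfun : S k l = fun y => pd k (X l) y
        - (eps k l 0 * Y 0 y + eps k l 1 * Y 1 y + eps k l 2 * Y 2 y) := by
      funext y; rw [hS, Fin.sum_univ_three]
    rw [hfun]
    exact pd_expand j _ _ _ (pd_diffAt (cX l) k)
      ((cY 0).differentiableAt (by simp)) ((cY 1).differentiableAt (by simp))
      ((cY 2).differentiableAt (by simp))
  have hpdXi : ∀ j k l : Fin 3, pd j (Xi k l) x = pd j (pd k (Y l)) x := by
    intro j k l
    have hfun : Xi k l = pd k (Y l) := funext (hXi k l)
    rw [hfun]
  have hsX : ∀ l a b : Fin 3, pd a (pd b (X l)) x = pd b (pd a (X l)) x :=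
    fun l a b => pd_symm (cX l) a b
  have hsY : ∀ l a b : Fin 3, pd a (pd b (Y l)) x = pd b (pd a (Y l)) x :=
    fun l a b => pd_symm (cY l) a b
  constructor
  · simp only [Fin.sum_univ_three, hpdS, hXi]
    fin_cases i <;> fin_cases l <;>
      · norm_num [eps, Fin.ext_iff, fin_mk_two]
        linarith [hsX 0 0 1, hsX 0 0 2, hsX 0 1 2, hsX 1 0 1, hsX 1 0 2, hsX 1 1 2,
          hsX 2 0 1, hsX 2 0 2, hsX 2 1 2]
  · simp only [Fin.sum_univ_three, hpdXi]
    fin_cases i <;>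
      · norm_num [eps, Fin.ext_iff, fin_mk_two]
        linarith [hsY l 0 1, hsY l 0 2, hsY l 1 2]
end

section
/- Let Σ be a smooth symmetric 2-tensor field on an open subset of ℝ³ and set Ξⱼₗ = εₗⁱᵐ ∂ᵢΣₘⱼ. Then the coupled curl of the pair (Σ, Ξ), given by curl(Σ, Ξ) = (εᵢʲᵏ ∂ⱼΣₖₗ − Ξₗᵢ + δᵢₗ Ξₘᵐ, εᵢʲᵏ ∂ⱼΞₖₗ), equals (0, (curl curl Σ)ᵢₗ), where (curl curl Σ)ᵢₗ = εᵢᵏᵐ εₗʲⁿ ∂ₖ∂ⱼ Σₘₙ. -/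
open scoped BigOperators

private lemma pd_sum9 (j : Fin 3) (c : Fin 3 → Fin 3 → ℝ)
    (g : Fin 3 → Fin 3 → (Fin 3 → ℝ) → ℝ) (x : Fin 3 → ℝ)
    (hg : ∀ p m, DifferentiableAt ℝ (g p m) x) :
    pd j (fun y => ∑ p, ∑ m, c p m * g p m y) x
      = ∑ p, ∑ m, c p m * pd j (g p m) x := by
  unfold pd
  rw [fderiv_fun_sum (fun p _ => DifferentiableAt.fun_sum
    (fun m _ => ((hg p m).const_mul (c p m))))]
  rw [ContinuousLinearMap.sum_apply]
  refine Finset.sum_congr rfl fun p _ => ?_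
  rw [fderiv_fun_sum (fun m _ => ((hg p m).const_mul (c p m)))]
  rw [ContinuousLinearMap.sum_apply]
  refine Finset.sum_congr rfl fun m _ => ?_
  rw [fderiv_const_mul (hg p m)]
  simp

/-- For symmetric `Σ` with `Ξⱼₗ = εₗⁱᵐ ∂ᵢΣₘⱼ`, the coupled curl of `(Σ, Ξ)`
equals `(0, curl curl Σ)`. -/
theorem coupled_curl_of_symmetric (U : Set (Fin 3 → ℝ)) (hU : IsOpen U)
    (S : Fin 3 → Fin 3 → (Fin 3 → ℝ) → ℝ)
    (hSsmooth : ∀ i j, ContDiffOn ℝ (⊤ : ℕ∞) (S i j) U)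
    (hSsym : ∀ i j x, S i j x = S j i x)
    (Xi : Fin 3 → Fin 3 → (Fin 3 → ℝ) → ℝ)
    (hXi : ∀ j l x, Xi j l x = ∑ i, ∑ m, eps l i m * pd i (S m j) x) :
    ∀ i l, ∀ x ∈ U,
      ((∑ j, ∑ k, eps i j k * pd j (S k l) x) - Xi l i x
        + (if i = l then ∑ m, Xi m m x else 0) = 0) ∧
      (∑ j, ∑ k, eps i j k * pd j (Xi k l) x
        = ∑ k, ∑ m, ∑ j, ∑ n, eps i k m * eps l j n * pd k (fun y => pd j (S m n) y) x) := by
  intro i l x hx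
  have hsy : ∀ a b : Fin 3, S a b = S b a := fun a b => funext (hSsym a b)
  have hd : ∀ (p m k : Fin 3), DifferentiableAt ℝ (fun y => pd p (S m k) y) x := by
    intro p m k
    have h1 : ContDiffOn ℝ (⊤ : ℕ∞) (fun y => fderiv ℝ (S m k) y) U :=
      (hSsmooth m k).fderiv_of_isOpen hU (by simp)
    have h2 : ContDiffOn ℝ (⊤ : ℕ∞) (fun y => fderiv ℝ (S m k) y (Pi.single p 1)) U :=
      h1.clm_apply contDiffOn_const
    exact ((h2.differentiableOn (by simp)) x hx).differentiableAt (hU.mem_nhds hx)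
  have htr : (∑ m, Xi m m x) = 0 := by
    simp only [hXi, Fin.sum_univ_three]
    norm_num [eps]
    simp only [hsy 1 0, hsy 2 0, hsy 2 1]
    ring
  have hmain : (∑ j, ∑ k, eps i j k * pd j (S k l) x) = Xi l i x := by
    rw [hXi]
  constructor
  · rw [hmain]
    simp [htr]
  · have hXifun : ∀ k l : Fin 3,
        Xi k l = fun y => ∑ p, ∑ m, eps l p m * pd p (S m k) y := by
      intro k l; funext y; exact hXi k l y
    have key : ∀ j k : Fin 3, pd j (Xi k l) x
        = ∑ p, ∑ m, eps l p m * pd j (fun y => pd p (S m k) y) x := by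
      intro j k
      rw [hXifun k l]
      exact pd_sum9 j _ _ x (fun p m => hd p m k)
    simp only [key, Fin.sum_univ_three]
    norm_num [eps]
    simp only [hsy 1 0, hsy 2 0, hsy 2 1]
    ring
end

section
/- The kernel of the modified gradient grad(X,Y) = (∂ⱼXₗ − εⱼₗᵐ Yₘ, ∂ⱼYₗ) on a connected open subset U ⊆ ℝ³ consists exactly of pairs (X, Y) with Y a constant vector b and Xₗ(x) = aₗ + εⱼₗᵐ xⱼ bₘ for a constant vector a; in particular this kernel is a 6-dimensional real vector space. -/
open scoped BigOperators

/-- Extensionality for continuous linear maps on `ℝ³` via the standard basis. -/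
lemma clm_ext_basis {L L' : (Fin 3 → ℝ) →L[ℝ] ℝ}
    (h : ∀ j, L (Pi.single j 1) = L' (Pi.single j 1)) : L = L' := by
  apply ContinuousLinearMap.coe_injective
  apply (Pi.basisFun ℝ (Fin 3)).ext
  intro j
  simpa using h j

/-- The linear map `v ↦ ∑ j (∑ m eps j l m * b m) * v j`. -/
noncomputable def Lmat (l : Fin 3) (b : Fin 3 → ℝ) : (Fin 3 → ℝ) →L[ℝ] ℝ :=
  ∑ j, (∑ m, eps j l m * b m) • ContinuousLinearMap.proj j

lemma Lmat_apply (l : Fin 3) (b v : Fin 3 → ℝ) :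
    Lmat l b v = ∑ j, (∑ m, eps j l m * b m) * v j := by
  simp [Lmat, ContinuousLinearMap.sum_apply]

lemma Lmat_single (l : Fin 3) (b : Fin 3 → ℝ) (j : Fin 3) :
    Lmat l b (Pi.single j 1) = ∑ m, eps j l m * b m := by
  rw [Lmat_apply]
  simp [Pi.single_apply, Finset.sum_ite_eq]

lemma Lmat_eq_sum (l : Fin 3) (b x : Fin 3 → ℝ) :
    Lmat l b x = ∑ j, ∑ m, eps j l m * x j * b m := by
  rw [Lmat_apply]
  refine Finset.sum_congr rfl fun j _ => ?_
  rw [Finset.sum_mul]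
  exact Finset.sum_congr rfl fun m _ => by ring

/-- A function with vanishing derivative on a connected open set is constant. -/
lemma const_on_of_deriv_zero {U : Set (Fin 3 → ℝ)} (hU : IsOpen U)
    (hc : IsPreconnected U) {f : (Fin 3 → ℝ) → ℝ}
    (hf : ∀ x ∈ U, HasFDerivAt f (0 : (Fin 3 → ℝ) →L[ℝ] ℝ) x)
    {x y : Fin 3 → ℝ} (hx : x ∈ U) (hy : y ∈ U) : f x = f y := by
  have loc : ∀ z ∈ U, ∃ r > 0, Metric.ball z r ⊆ U ∧
      ∀ w ∈ Metric.ball z r, f w = f z := by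
    intro z hz
    obtain ⟨r, hr, hball⟩ := Metric.isOpen_iff.1 hU z hz
    refine ⟨r, hr, hball, fun w hw => ?_⟩
    refine (convex_ball z r).is_const_of_fderivWithin_eq_zero
      (fun u hu => (hf u (hball hu)).differentiableAt.differentiableWithinAt)
      (fun u hu => ?_) hw (Metric.mem_ball_self hr)
    rw [fderivWithin_of_isOpen Metric.isOpen_ball hu, (hf u (hball hu)).fderiv]
  set V : Set (Fin 3 → ℝ) := {z | z ∈ U ∧ f z = f y} with hV
  set W : Set (Fin 3 → ℝ) := {z | z ∈ U ∧ f z ≠ f y} with hW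
  have hVopen : IsOpen V := by
    rw [Metric.isOpen_iff]
    rintro z ⟨hz, hfz⟩
    obtain ⟨r, hr, hball, hconst⟩ := loc z hz
    exact ⟨r, hr, fun w hw => ⟨hball hw, (hconst w hw).trans hfz⟩⟩
  have hWopen : IsOpen W := by
    rw [Metric.isOpen_iff]
    rintro z ⟨hz, hfz⟩
    obtain ⟨r, hr, hball, hconst⟩ := loc z hz
    exact ⟨r, hr, fun w hw => ⟨hball hw, by rw [hconst w hw]; exact hfz⟩⟩
  have hsub : U ⊆ V ∪ W := by
    intro z hz
    by_cases h : f z = f y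
    · exact Or.inl ⟨hz, h⟩
    · exact Or.inr ⟨hz, h⟩
  have hdisj : Disjoint V W := by
    rw [Set.disjoint_iff]
    rintro z ⟨⟨_, h1⟩, ⟨_, h2⟩⟩
    exact absurd h1 h2
  have := hc.subset_left_of_subset_union hVopen hWopen hdisj hsub ⟨y, hy, hy, rfl⟩
  exact (this hx).2

/-- The kernel of the modified gradient on a connected open set consists exactly of the
infinitesimal rigid motions `Y = b`, `Xₗ(x) = aₗ + εⱼₗₘ xⱼ bₘ`; the parametrization by
`(a, b) ∈ ℝ³ × ℝ³` is unique, so the kernel is a 6-dimensional real vector space. -/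
theorem kernel_modGrad (U : Set (Fin 3 → ℝ)) (hU : IsOpen U)
    (hconn : IsConnected U)
    (X Y : Fin 3 → (Fin 3 → ℝ) → ℝ)
    (hX : ∀ i, ContDiffOn ℝ (⊤ : ℕ∞) (X i) U) (hY : ∀ i, ContDiffOn ℝ (⊤ : ℕ∞) (Y i) U) :
    (∀ j l, ∀ x ∈ U,
        pd j (X l) x = (∑ m, eps j l m * Y m x) ∧ pd j (Y l) x = 0) ↔
      ∃! p : (Fin 3 → ℝ) × (Fin 3 → ℝ),
        ∀ l, ∀ x ∈ U,
          Y l x = p.2 l ∧ X l x = p.1 l + ∑ j, ∑ m, eps j l m * x j * p.2 m := by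
  obtain ⟨x₀, hx₀⟩ := hconn.nonempty
  constructor
  · intro h
    -- Y is constant on U
    have hYd : ∀ l, ∀ x ∈ U, HasFDerivAt (Y l) (0 : (Fin 3 → ℝ) →L[ℝ] ℝ) x := by
      intro l x hx
      have hdiff : DifferentiableAt ℝ (Y l) x :=
        ((hY l).contDiffAt (hU.mem_nhds hx)).differentiableAt (by simp)
      have h0 : fderiv ℝ (Y l) x = 0 := by
        apply clm_ext_basis
        intro j
        simpa [pd] using (h j l x hx).2
      have := hdiff.hasFDerivAt
      rwa [h0] at this
    set b : Fin 3 → ℝ := fun l => Y l x₀ with hb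
    have hYconst : ∀ l, ∀ x ∈ U, Y l x = b l := fun l x hx =>
      const_on_of_deriv_zero hU hconn.isPreconnected (hYd l) hx hx₀
    -- X l minus the linear part has zero derivative
    have hZd : ∀ l, ∀ x ∈ U,
        HasFDerivAt (fun z => X l z - Lmat l b z) (0 : (Fin 3 → ℝ) →L[ℝ] ℝ) x := by
      intro l x hx
      have hdX : DifferentiableAt ℝ (X l) x :=
        ((hX l).contDiffAt (hU.mem_nhds hx)).differentiableAt (by simp)
      have hfd : fderiv ℝ (X l) x = Lmat l b := by
        apply clm_ext_basis
        intro j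
        rw [Lmat_single]
        have := (h j l x hx).1
        rw [pd] at this
        rw [this]
        exact Finset.sum_congr rfl fun m _ => by rw [hYconst m x hx]
      have h1 := hdX.hasFDerivAt.sub (Lmat l b).hasFDerivAt
      rwa [hfd, sub_self] at h1
    set a : Fin 3 → ℝ := fun l => X l x₀ - Lmat l b x₀ with ha
    have hXval : ∀ l, ∀ x ∈ U, X l x = a l + Lmat l b x := by
      intro l x hx
      have := const_on_of_deriv_zero hU hconn.isPreconnected (hZd l) hx hx₀
      simp only [ha]
      linarith
    refine ⟨(a, b), fun l x hx => ⟨hYconst l x hx, ?_⟩, ?_⟩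
    · rw [hXval l x hx, Lmat_eq_sum]
    · rintro ⟨a', b'⟩ hq
      have hb' : b' = b := by
        funext l
        exact ((hq l x₀ hx₀).1).symm
      have ha' : a' = a := by
        funext l
        have h2 := (hq l x₀ hx₀).2
        rw [hb'] at h2
        rw [← Lmat_eq_sum] at h2
        simp only [ha]
        linarith
      simp [ha', hb']
  · rintro ⟨p, hp, -⟩ j l x hx
    have hYx : Y l =ᶠ[nhds x] fun _ => p.2 l :=
      Filter.eventuallyEq_of_mem (hU.mem_nhds hx) fun z hz => (hp l z hz).1
    have hXx : X l =ᶠ[nhds x] fun z => p.1 l + Lmat l p.2 z :=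
      Filter.eventuallyEq_of_mem (hU.mem_nhds hx) fun z hz => by
        rw [(hp l z hz).2, Lmat_eq_sum]
    constructor
    · have hg : HasFDerivAt (fun z => p.1 l + Lmat l p.2 z) (Lmat l p.2) x :=
        (Lmat l p.2).hasFDerivAt.const_add (p.1 l)
      rw [pd, hXx.fderiv_eq, hg.fderiv, Lmat_single]
      exact Finset.sum_congr rfl fun m _ => by rw [(hp m x hx).1]
    · rw [pd, hYx.fderiv_eq, fderiv_fun_const]
      simp
end
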